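/- arXiv:1609.01642 — 2 statements merged into one kernel-verified Lean document; each statement's English description precedes it below -/
import Mathlib

section
/- The maximal operator V defined from the expressions V_n in the context is bounded from L_∞(G_m × G_m) to L_∞(G_m × G_m): there is a constant c such that ‖Vf‖_∞ ≤ c‖f‖_∞ for all bounded measurable f, because sup_n ∑_{q=0}^{n} ∑_{k=q}^{n} M_q M_k / (M_k M_n) ≤ c. -/
open Complex Finset

noncomputable section

/-- The generalized number system: `M 0 = 1`, `M (k+1) = m k * M k`. -/
def Mf (m : ℕ → ℕ) : ℕ → ℕ
  | 0 => 1
  | k + 1 => m k * Mf m k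

/-- The generalized Rademacher function `r_k(x) = exp(2πi x_k / m_k)`. -/
def rad (m : ℕ → ℕ) (k : ℕ) (x : ∀ j, ZMod (m j)) : ℂ :=
  Complex.exp (2 * Real.pi * Complex.I * (x k).val / (m k))

/-- The Vilenkin function `ψ_n(x) = ∏ k, r_k(x)^{n_k}` where `n_k = (n / M_k) % m_k`
is the k-th digit of `n` in the generalized number system. -/
def psi (m : ℕ → ℕ) (n : ℕ) (x : ∀ j, ZMod (m j)) : ℂ :=
  ∏ k ∈ Finset.range (n + 1), rad m k x ^ ((n / Mf m k) % m k)

/-- Vilenkin Dirichlet kernel. -/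
def Dker (m : ℕ → ℕ) (n : ℕ) (x : ∀ j, ZMod (m j)) : ℂ :=
  ∑ j ∈ Finset.range n, psi m j x

/-- One-dimensional Vilenkin Fejér kernel. -/
def Fejer (m : ℕ → ℕ) (n : ℕ) (x : ∀ j, ZMod (m j)) : ℂ :=
  (n : ℂ)⁻¹ * ∑ k ∈ Finset.range n, Dker m k x

/-- Two-dimensional Marcinkiewicz–Fejér kernel. -/
def MKer (m : ℕ → ℕ) (n : ℕ) (x y : ∀ j, ZMod (m j)) : ℂ :=
  (n : ℂ)⁻¹ * ∑ k ∈ Finset.range n, Dker m k x * Dker m k y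

/-- `e_s ∈ G_m`: the element whose s-th coordinate is 1 and all others are 0. -/
def evec (m : ℕ → ℕ) (s : ℕ) : ∀ j, ZMod (m j) :=
  fun j => if j = s then 1 else 0

/-- `r_{i,n}(x,y) = ∏_{l=i}^{n} ∑_{s=0}^{m_l-1} ψ_{M_l}(x+y)^s`. -/
def rr (m : ℕ → ℕ) (i n : ℕ) (x y : ∀ j, ZMod (m j)) : ℂ :=
  ∏ l ∈ Finset.Icc i n, ∑ s ∈ Finset.range (m l), psi m (Mf m l) (x + y) ^ s

open MeasureTheory ENNReal NNReal
open scoped Classical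

/-- Discrete measurable structure on `ZMod n`. -/
instance (n : ℕ) : MeasurableSpace (ZMod n) := ⊤

/-- The cylinder set `I_k(z) = {x : x_j = z_j for j < k}`. -/
def cyl (m : ℕ → ℕ) (k : ℕ) (z : ∀ j, ZMod (m j)) : Set (∀ j, ZMod (m j)) :=
  {x | ∀ j < k, x j = z j}

variable (m : ℕ → ℕ)

/-- First term of `V_n`. -/
def V1 (μ : Measure ((∀ j, ZMod (m j)) × (∀ j, ZMod (m j))))
    (n : ℕ) (f : (∀ j, ZMod (m j)) × (∀ j, ZMod (m j)) → ℂ) (x y : ∀ j, ZMod (m j)) : ℂ :=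
  ∑ q ∈ Finset.range n, ∑ k ∈ Finset.Icc q (n - 1), ∑ v ∈ Finset.Icc 1 (m q - 1),
    ((Mf m q : ℂ) * (Mf m k : ℂ) / (m k : ℂ)) *
      ∫ tu in (cyl m k (v • evec m q)) ×ˢ (cyl m k 0),
        f (x - tu.1, y - tu.2) *
          (if ∀ r ∈ Finset.Icc (k + 1) (n - 1), tu.1 r + tu.2 r = 0 then 1 else 0) ∂μ

/-- Second (symmetric) term of `V_n`. -/
def V2 (μ : Measure ((∀ j, ZMod (m j)) × (∀ j, ZMod (m j))))
    (n : ℕ) (f : (∀ j, ZMod (m j)) × (∀ j, ZMod (m j)) → ℂ) (x y : ∀ j, ZMod (m j)) : ℂ :=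
  ∑ q ∈ Finset.range n, ∑ k ∈ Finset.Icc q (n - 1), ∑ v ∈ Finset.Icc 1 (m q - 1),
    ((Mf m q : ℂ) * (Mf m k : ℂ) / (m k : ℂ)) *
      ∫ tu in (cyl m k 0) ×ˢ (cyl m k (v • evec m q)),
        f (x - tu.1, y - tu.2) *
          (if ∀ r ∈ Finset.Icc (k + 1) (n - 1), tu.1 r + tu.2 r = 0 then 1 else 0) ∂μ

/-- Third term of `V_n`. -/
def V3 (μ : Measure ((∀ j, ZMod (m j)) × (∀ j, ZMod (m j))))
    (n : ℕ) (f : (∀ j, ZMod (m j)) × (∀ j, ZMod (m j)) → ℂ) (x y : ∀ j, ZMod (m j)) : ℂ :=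
  ∑ s ∈ Finset.range (n + 1), ∑ i ∈ Finset.Icc s n, ∑ v ∈ Finset.Icc 1 (m s - 1),
    ((Mf m s : ℂ) * (Mf m i : ℂ)) *
      ∫ tu in (cyl m n 0) ×ˢ (cyl m i (v • evec m s)), f (x - tu.1, y - tu.2) ∂μ

/-- Fourth (symmetric) term of `V_n`. -/
def V4 (μ : Measure ((∀ j, ZMod (m j)) × (∀ j, ZMod (m j))))
    (n : ℕ) (f : (∀ j, ZMod (m j)) × (∀ j, ZMod (m j)) → ℂ) (x y : ∀ j, ZMod (m j)) : ℂ :=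
  ∑ s ∈ Finset.range (n + 1), ∑ i ∈ Finset.Icc s n, ∑ v ∈ Finset.Icc 1 (m s - 1),
    ((Mf m s : ℂ) * (Mf m i : ℂ)) *
      ∫ tu in (cyl m i (v • evec m s)) ×ˢ (cyl m n 0), f (x - tu.1, y - tu.2) ∂μ

/-- `V_n = V_n^{(1)} + V_n^{(2)} + V_n^{(3)} + V_n^{(4)}`. -/
def Vop (μ : Measure ((∀ j, ZMod (m j)) × (∀ j, ZMod (m j))))
    (n : ℕ) (f : (∀ j, ZMod (m j)) × (∀ j, ZMod (m j)) → ℂ) (x y : ∀ j, ZMod (m j)) : ℂ :=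
  V1 m μ n f x y + V2 m μ n f x y + V3 m μ n f x y + V4 m μ n f x y

/-! Each term of `V_n f` integrates `f` over a product of cylinders, in `V_n^{(1)}` and
`V_n^{(2)}` intersected with `{t_r + u_r = 0, k < r < n}` (`sumZeroOn`). Splitting cylinders one
coordinate at a time and using `μ (I_k × I_k) = M_k⁻²`, these sets have measure at most
`m_k / (M_k M_n)`, resp. `1 / (M_i M_n)`, so each term is at most `‖f‖_∞ M_q / M_n ≤ ‖f‖_∞ 2^{q-n}`.
There are at most `B (n - q + 1)` terms for a given `q`, and `∑ j, (j + 1) 2^{-j} = 4`, whence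
`‖V_n f‖ ≤ 16 B ‖f‖_∞`. -/

section Growth

variable {m : ℕ → ℕ}

lemma Mf_succ (k : ℕ) : Mf m (k + 1) = m k * Mf m k := rfl

lemma Mf_pos (hm : ∀ k, m k ≠ 0) (k : ℕ) : 0 < Mf m k := by
  induction k with
  | zero => exact Nat.one_pos
  | succ k ih => exact Nat.mul_pos (Nat.pos_of_ne_zero (hm k)) ih

lemma Mf_mul_two_pow_le (hm : ∀ k, 2 ≤ m k) (q d : ℕ) : Mf m q * 2 ^ d ≤ Mf m (q + d) := by
  induction d with
  | zero => simp
  | succ d ih =>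
    rw [← add_assoc, Mf_succ, pow_succ, mul_comm (m _), ← mul_assoc]
    exact Nat.mul_le_mul ih (hm _)

lemma Mf_div_Mf_le (hm : ∀ k, 2 ≤ m k) {q n : ℕ} (hqn : q ≤ n) :
    (Mf m q : ℝ) / Mf m n ≤ (1 / 2) ^ (n - q) := by
  have hpos : (0 : ℝ) < Mf m n := by
    exact_mod_cast Mf_pos (fun k => by have := hm k; omega) n
  have hle : (Mf m q : ℝ) * 2 ^ (n - q) ≤ Mf m n := by
    exact_mod_cast Nat.add_sub_cancel' hqn ▸ Mf_mul_two_pow_le hm q (n - q)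
  rw [div_le_iff₀ hpos, one_div, inv_pow, inv_mul_eq_div, le_div_iff₀ (by positivity)]
  exact hle

end Growth

lemma sum_range_succ_mul_half_pow (N : ℕ) :
    ∑ j ∈ Finset.range N, ((j : ℝ) + 1) * (1 / 2) ^ j = 4 - 2 * (N + 2) * (1 / 2) ^ N := by
  induction N with
  | zero => norm_num
  | succ N ih => rw [Finset.sum_range_succ, ih, pow_succ]; push_cast; ring

lemma sum_range_succ_mul_half_pow_le (N : ℕ) :
    ∑ j ∈ Finset.range N, ((j : ℝ) + 1) * (1 / 2) ^ j ≤ 4 := by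
  rw [sum_range_succ_mul_half_pow]
  have : 0 ≤ 2 * ((N : ℝ) + 2) * (1 / 2) ^ N := by positivity
  linarith

lemma MeasureTheory.measure_le_card_mul_of_subset_iUnion {α ι : Type*} [MeasurableSpace α]
    [Fintype ι] {μ : Measure α} {t : Set α} {s : ι → Set α} {β : ℝ≥0∞}
    (ht : t ⊆ ⋃ i, s i) (hs : ∀ i, μ (s i) ≤ β) : μ t ≤ Fintype.card ι * β :=
  calc μ t ≤ ∑ i, μ (s i) := (measure_mono ht).trans (measure_iUnion_fintype_le μ s)
    _ ≤ ∑ _i : ι, β := Finset.sum_le_sum fun i _ => hs i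
    _ = Fintype.card ι * β := by simp

lemma ENNReal.natCast_mul_inv_mul_cancel_left {a : ℕ} (ha : a ≠ 0) (x y : ℝ≥0∞) :
    (a : ℝ≥0∞) * ((a * x) * y)⁻¹ = (x * y)⁻¹ := by
  have ha' : (a : ℝ≥0∞) ≠ 0 := Nat.cast_ne_zero.2 ha
  rw [mul_assoc, ENNReal.mul_inv (Or.inl ha') (Or.inl (ENNReal.natCast_ne_top a)), ← mul_assoc,
    ENNReal.mul_inv_cancel ha' (ENNReal.natCast_ne_top a), one_mul]

section Cylinders

variable {m : ℕ → ℕ} {μ : Measure ((∀ j, ZMod (m j)) × (∀ j, ZMod (m j)))}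

def sumZeroOn (m : ℕ → ℕ) (s : Finset ℕ) : Set ((∀ j, ZMod (m j)) × (∀ j, ZMod (m j))) :=
  {tu | ∀ r ∈ s, tu.1 r + tu.2 r = 0}

lemma measurableSet_sumZeroOn (hm : ∀ k, m k ≠ 0) (s : Finset ℕ) :
    MeasurableSet (sumZeroOn m s) := by
  simp only [sumZeroOn, Set.ofPred_forall]
  refine Finset.measurableSet_biInter _ fun r _ => ?_
  have : NeZero (m r) := ⟨hm r⟩
  have hmeas : Measurable fun tu : (∀ j, ZMod (m j)) × (∀ j, ZMod (m j)) => (tu.1 r, tu.2 r) := by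
    fun_prop
  exact hmeas (Set.toFinite {p : ZMod (m r) × ZMod (m r) | p.1 + p.2 = 0}).measurableSet

lemma mem_cyl_succ_update {a : ℕ} {t z : ∀ j, ZMod (m j)} {c : ZMod (m a)} :
    t ∈ cyl m (a + 1) (Function.update z a c) ↔ t ∈ cyl m a z ∧ t a = c := by
  simp only [cyl, Set.mem_ofPred_eq, Nat.lt_succ_iff_lt_or_eq, or_imp, forall_and,
    forall_eq]
  refine and_congr (forall₂_congr fun j hj => ?_) (by simp)
  rw [Function.update_of_ne hj.ne]

lemma cyl_eq_iUnion_cyl_succ (a : ℕ) (z : ∀ j, ZMod (m j)) :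
    cyl m a z = ⋃ c : ZMod (m a), cyl m (a + 1) (Function.update z a c) := by
  ext t
  simp [mem_cyl_succ_update]

variable (hm : ∀ k, m k ≠ 0)
  (hcyl : ∀ (k : ℕ) (z w : ∀ j, ZMod (m j)),
    μ ((cyl m k z) ×ˢ (cyl m k w)) = ((Mf m k : ℝ≥0∞) * (Mf m k : ℝ≥0∞))⁻¹)
include hm hcyl

lemma measure_cyl_prod_cyl_le_of_le {a b : ℕ} (hab : a ≤ b) (z w : ∀ j, ZMod (m j)) :
    μ (cyl m a z ×ˢ cyl m b w) ≤ ((Mf m a : ℝ≥0∞) * Mf m b)⁻¹ := by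
  obtain ⟨d, rfl⟩ := Nat.exists_eq_add_of_le hab
  clear hab
  induction d generalizing a z with
  | zero => exact (hcyl a z w).le
  | succ d ih =>
    have : NeZero (m a) := ⟨hm a⟩
    rw [cyl_eq_iUnion_cyl_succ a z, Set.iUnion_prod_const, ← add_assoc, add_right_comm]
    refine (measure_le_card_mul_of_subset_iUnion subset_rfl
      fun (c : ZMod (m a)) => ih _).trans_eq ?_
    rw [ZMod.card, Mf_succ, Nat.cast_mul, ENNReal.natCast_mul_inv_mul_cancel_left (hm a)]

lemma measure_cyl_prod_cyl_le_of_ge {a b : ℕ} (hba : b ≤ a) (z w : ∀ j, ZMod (m j)) :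
    μ (cyl m a z ×ˢ cyl m b w) ≤ ((Mf m a : ℝ≥0∞) * Mf m b)⁻¹ := by
  obtain ⟨d, rfl⟩ := Nat.exists_eq_add_of_le hba
  clear hba
  induction d generalizing b w with
  | zero => exact (hcyl b z w).le
  | succ d ih =>
    have : NeZero (m b) := ⟨hm b⟩
    rw [cyl_eq_iUnion_cyl_succ b w, Set.prod_iUnion, ← add_assoc, add_right_comm]
    refine (measure_le_card_mul_of_subset_iUnion subset_rfl
      fun (c : ZMod (m b)) => ih _).trans_eq ?_
    rw [ZMod.card, Mf_succ, Nat.cast_mul, mul_comm _ ((m b : ℝ≥0∞) * _),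
      ENNReal.natCast_mul_inv_mul_cancel_left (hm b), mul_comm]

lemma measure_cyl_prod_cyl_le (a b : ℕ) (z w : ∀ j, ZMod (m j)) :
    μ (cyl m a z ×ˢ cyl m b w) ≤ ((Mf m a : ℝ≥0∞) * Mf m b)⁻¹ :=
  (le_total a b).elim (measure_cyl_prod_cyl_le_of_le hm hcyl · z w)
    (measure_cyl_prod_cyl_le_of_ge hm hcyl · z w)

lemma measure_cyl_prod_cyl_inter_sumZeroOn_le {a b : ℕ} (hab : a ≤ b) (z w : ∀ j, ZMod (m j)) :
    μ ((cyl m a z ×ˢ cyl m a w) ∩ sumZeroOn m (Finset.Ico a b)) ≤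
      ((Mf m a : ℝ≥0∞) * Mf m b)⁻¹ := by
  obtain ⟨d, rfl⟩ := Nat.exists_eq_add_of_le hab
  clear hab
  induction d generalizing a z w with
  | zero => simpa [sumZeroOn] using (hcyl a z w).le
  | succ d ih =>
    have : NeZero (m a) := ⟨hm a⟩
    -- the constraint at `r = a` forces `u a = -t a`, so `m a` pieces suffice
    have hsub : (cyl m a z ×ˢ cyl m a w) ∩ sumZeroOn m (Finset.Ico a (a + (d + 1))) ⊆
        ⋃ c : ZMod (m a), (cyl m (a + 1) (Function.update z a c) ×ˢ
          cyl m (a + 1) (Function.update w a (-c))) ∩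
            sumZeroOn m (Finset.Ico (a + 1) (a + 1 + d)) := by
      rintro ⟨t, u⟩ ⟨⟨ht, hu⟩, hs⟩
      simp only [Set.mem_iUnion, Set.mem_inter_iff, Set.mem_prod, mem_cyl_succ_update]
      refine ⟨t a, ⟨⟨ht, rfl⟩, hu, eq_neg_of_add_eq_zero_right (hs a (by simp))⟩,
        fun r hr => hs r (by simp at hr ⊢; omega)⟩
    refine (measure_le_card_mul_of_subset_iUnion hsub fun c => ih _ _).trans_eq ?_
    rw [ZMod.card, Mf_succ, Nat.cast_mul, ENNReal.natCast_mul_inv_mul_cancel_left (hm a),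
      add_right_comm, add_assoc]

lemma measure_cyl_prod_cyl_inter_sumZeroOn_Ico_succ_le {k n : ℕ} (hkn : k < n)
    (z w : ∀ j, ZMod (m j)) :
    μ ((cyl m k z ×ˢ cyl m k w) ∩ sumZeroOn m (Finset.Ico (k + 1) n)) ≤
      m k * ((Mf m k : ℝ≥0∞) * Mf m n)⁻¹ := by
  have : NeZero (m k) := ⟨hm k⟩
  have hsub : (cyl m k z ×ˢ cyl m k w) ∩ sumZeroOn m (Finset.Ico (k + 1) n) ⊆
      ⋃ c : ZMod (m k) × ZMod (m k), (cyl m (k + 1) (Function.update z k c.1) ×ˢ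
        cyl m (k + 1) (Function.update w k c.2)) ∩ sumZeroOn m (Finset.Ico (k + 1) n) := by
    rintro ⟨t, u⟩ ⟨⟨ht, hu⟩, hs⟩
    simp only [Set.mem_iUnion, Set.mem_inter_iff, Set.mem_prod, mem_cyl_succ_update]
    exact ⟨(t k, u k), ⟨⟨ht, rfl⟩, hu, rfl⟩, hs⟩
  refine (measure_le_card_mul_of_subset_iUnion hsub
    fun _ => measure_cyl_prod_cyl_inter_sumZeroOn_le hm hcyl hkn _ _).trans_eq ?_
  rw [Fintype.card_prod, ZMod.card, Nat.cast_mul, Mf_succ, Nat.cast_mul, mul_assoc,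
    ENNReal.natCast_mul_inv_mul_cancel_left (hm k)]

end Cylinders

lemma MeasureTheory.norm_mul_setIntegral_le_of_measure_le {α : Type*} [MeasurableSpace α]
    {μ : Measure α} {S : Set α} {ρ : ℝ≥0∞} (hρ : ρ ≠ ⊤) (hS : μ S ≤ ρ) {g : α → ℂ} {C : ℝ}
    (hC : 0 ≤ C) (hg : ∀ z, ‖g z‖ ≤ C) (a : ℂ) :
    ‖a * ∫ z in S, g z ∂μ‖ ≤ ‖a‖ * (C * ρ.toReal) := by
  rw [norm_mul]
  gcongr
  exact (norm_setIntegral_le_of_norm_le_const (hS.trans_lt hρ.lt_top) fun z _ => hg z).trans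
    (by gcongr; exact ENNReal.toReal_mono hρ hS)

section Terms

variable {m : ℕ → ℕ} {μ : Measure ((∀ j, ZMod (m j)) × (∀ j, ZMod (m j)))}
  (hm : ∀ k, m k ≠ 0) {f : (∀ j, ZMod (m j)) × (∀ j, ZMod (m j)) → ℂ} {C : ℝ} (hC : 0 ≤ C)
  (hf : ∀ z, ‖f z‖ ≤ C)
include hm hC hf

lemma norm_V1_term_le (hcyl : ∀ (k : ℕ) (z w : ∀ j, ZMod (m j)),
      μ ((cyl m k z) ×ˢ (cyl m k w)) = ((Mf m k : ℝ≥0∞) * (Mf m k : ℝ≥0∞))⁻¹)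
    {q k n : ℕ} (hkn : k < n) (x y z w : ∀ j, ZMod (m j)) :
    ‖((Mf m q : ℂ) * (Mf m k : ℂ) / (m k : ℂ)) *
      ∫ tu in (cyl m k z) ×ˢ (cyl m k w),
        f (x - tu.1, y - tu.2) *
          (if ∀ r ∈ Finset.Icc (k + 1) (n - 1), tu.1 r + tu.2 r = 0 then 1 else 0) ∂μ‖
      ≤ C * (Mf m q / Mf m n) := by
  have hIcc : Finset.Icc (k + 1) (n - 1) = Finset.Ico (k + 1) n := by ext; simp; omega
  have hind : (fun tu : (∀ j, ZMod (m j)) × (∀ j, ZMod (m j)) => f (x - tu.1, y - tu.2) *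
      (if ∀ r ∈ Finset.Icc (k + 1) (n - 1), tu.1 r + tu.2 r = 0 then 1 else 0)) =
      (sumZeroOn m (Finset.Ico (k + 1) n)).indicator fun tu => f (x - tu.1, y - tu.2) := by
    ext tu
    simp [Set.indicator_apply, sumZeroOn, hIcc]
  rw [hind, setIntegral_indicator (measurableSet_sumZeroOn hm _)]
  have := Mf_pos hm k
  have := Mf_pos hm n
  have := hm k
  refine (norm_mul_setIntegral_le_of_measure_le
    (ENNReal.mul_ne_top (ENNReal.natCast_ne_top _) (ENNReal.inv_ne_top.2 (by positivity)))
    (measure_cyl_prod_cyl_inter_sumZeroOn_Ico_succ_le hm hcyl hkn z w) hC (fun _ => hf _)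
    _).trans_eq ?_
  simp only [ENNReal.toReal_mul, ENNReal.toReal_inv, ENNReal.toReal_natCast, norm_div, norm_mul,
    Complex.norm_natCast]
  field_simp

lemma norm_V3_term_le {s i n : ℕ} {S : Set ((∀ j, ZMod (m j)) × (∀ j, ZMod (m j)))}
    (hS : μ S ≤ ((Mf m i : ℝ≥0∞) * Mf m n)⁻¹) (x y : ∀ j, ZMod (m j)) :
    ‖((Mf m s : ℂ) * (Mf m i : ℂ)) * ∫ tu in S, f (x - tu.1, y - tu.2) ∂μ‖ ≤
      C * (Mf m s / Mf m n) := by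
  have := Mf_pos hm i
  have := Mf_pos hm n
  refine (norm_mul_setIntegral_le_of_measure_le (ENNReal.inv_ne_top.2 (by positivity)) hS hC
    (fun _ => hf _) _).trans_eq ?_
  simp only [ENNReal.toReal_mul, ENNReal.toReal_inv, ENNReal.toReal_natCast, norm_mul,
    Complex.norm_natCast]
  field_simp

end Terms

lemma norm_sum_range_sum_Icc_sum_Icc_le {m : ℕ → ℕ} (hm : ∀ k, 2 ≤ m k) {B : ℕ}
    (hB : ∀ k, m k ≤ B) {C : ℝ} (hC : 0 ≤ C) {N K n : ℕ} (hN : N ≤ n + 1) (hK : K ≤ n)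
    (a : ℕ → ℕ → ℕ → ℂ)
    (ha : ∀ q < N, ∀ k ∈ Finset.Icc q K, ∀ v, ‖a q k v‖ ≤ C * (Mf m q / Mf m n)) :
    ‖∑ q ∈ Finset.range N, ∑ k ∈ Finset.Icc q K, ∑ v ∈ Finset.Icc 1 (m q - 1), a q k v‖ ≤
      4 * B * C := by
  have hweight : ∀ q < N, ∑ k ∈ Finset.Icc q K, ∑ v ∈ Finset.Icc 1 (m q - 1),
      C * (Mf m q / Mf m n) ≤ B * C * (((n - q : ℕ) : ℝ) + 1) * (1 / 2) ^ (n - q) := by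
    intro q hq
    have hcardk : ((K + 1 - q : ℕ) : ℝ) ≤ ((n - q : ℕ) : ℝ) + 1 := by norm_cast; omega
    have hcardv : ((m q - 1 : ℕ) : ℝ) ≤ B := by norm_cast; have := hB q; omega
    have hratio := Mf_div_Mf_le hm (show q ≤ n by omega)
    simp only [Finset.sum_const, Nat.card_Icc, nsmul_eq_mul, Nat.add_sub_cancel]
    calc ((K + 1 - q : ℕ) : ℝ) * (((m q - 1 : ℕ) : ℝ) * (C * (Mf m q / Mf m n)))
        ≤ (((n - q : ℕ) : ℝ) + 1) * (B * (C * (1 / 2) ^ (n - q))) := by gcongr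
      _ = B * C * (((n - q : ℕ) : ℝ) + 1) * (1 / 2) ^ (n - q) := by ring
  calc _ ≤ ∑ q ∈ Finset.range N, ∑ k ∈ Finset.Icc q K, ∑ v ∈ Finset.Icc 1 (m q - 1),
        C * (Mf m q / Mf m n) :=
      norm_sum_le_of_le _ fun q hq => norm_sum_le_of_le _ fun k hk => norm_sum_le_of_le _
        fun v _ => ha q (Finset.mem_range.1 hq) k hk v
    _ ≤ ∑ q ∈ Finset.range (n + 1), B * C * (((n - q : ℕ) : ℝ) + 1) * (1 / 2) ^ (n - q) :=
      (Finset.sum_le_sum fun q hq => hweight q (Finset.mem_range.1 hq)).trans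
        (Finset.sum_le_sum_of_subset_of_nonneg (Finset.range_subset_range.2 hN)
          fun _ _ _ => by positivity)
    _ = B * C * ∑ j ∈ Finset.range (n + 1), ((j : ℝ) + 1) * (1 / 2) ^ j := by
      rw [Finset.mul_sum, ← Finset.sum_range_reflect]
      refine Finset.sum_congr rfl fun j hj => ?_
      rw [Nat.add_sub_cancel, Nat.sub_sub_self (Nat.lt_succ_iff.1 (Finset.mem_range.1 hj))]
      ring
    _ ≤ 4 * B * C := by
      nlinarith [sum_range_succ_mul_half_pow_le (n + 1), mul_nonneg (Nat.cast_nonneg B) hC]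

theorem stmt11 (hm : ∀ k, 2 ≤ m k) (B : ℕ) (hB : ∀ k, m k ≤ B)
    (μ : Measure ((∀ j, ZMod (m j)) × (∀ j, ZMod (m j))))
    (hcyl : ∀ (k : ℕ) (z w : ∀ j, ZMod (m j)),
      μ ((cyl m k z) ×ˢ (cyl m k w)) = ((Mf m k : ℝ≥0∞) * (Mf m k : ℝ≥0∞))⁻¹) :
    ∃ c : ℝ, 0 < c ∧ ∀ (f : (∀ j, ZMod (m j)) × (∀ j, ZMod (m j)) → ℂ) (C : ℝ),
      Measurable f → (∀ z, ‖f z‖ ≤ C) →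
      ∀ (n : ℕ) (x y : ∀ j, ZMod (m j)), ‖Vop m μ n f x y‖ ≤ c * C := by
  have hm0 : ∀ k, m k ≠ 0 := fun k => by have := hm k; omega
  have hB0 : (0 : ℝ) < B := by have := (hm 0).trans (hB 0); positivity
  refine ⟨16 * B, by positivity, fun f C _ hf n x y => ?_⟩
  have hC : 0 ≤ C := (norm_nonneg _).trans (hf 0)
  have h1 : ‖V1 m μ n f x y‖ ≤ 4 * B * C :=
    norm_sum_range_sum_Icc_sum_Icc_le hm hB hC (by omega) (Nat.sub_le n 1) _
      fun _ _ _ hk _ => norm_V1_term_le hm0 hC hf hcyl (by simp at hk; omega) _ _ _ _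
  have h2 : ‖V2 m μ n f x y‖ ≤ 4 * B * C :=
    norm_sum_range_sum_Icc_sum_Icc_le hm hB hC (by omega) (Nat.sub_le n 1) _
      fun _ _ _ hk _ => norm_V1_term_le hm0 hC hf hcyl (by simp at hk; omega) _ _ _ _
  have h3 : ‖V3 m μ n f x y‖ ≤ 4 * B * C :=
    norm_sum_range_sum_Icc_sum_Icc_le hm hB hC le_rfl le_rfl _ fun _ _ _ _ _ =>
      norm_V3_term_le hm0 hC hf ((measure_cyl_prod_cyl_le hm0 hcyl _ _ _ _).trans_eq
        (by rw [mul_comm])) _ _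
  have h4 : ‖V4 m μ n f x y‖ ≤ 4 * B * C :=
    norm_sum_range_sum_Icc_sum_Icc_le hm hB hC le_rfl le_rfl _ fun _ _ _ _ _ =>
      norm_V3_term_le hm0 hC hf (measure_cyl_prod_cyl_le hm0 hcyl _ _ _ _) _ _
  rw [Vop]
  exact norm_add₄_le.trans (by linarith)
end
end

section
/- If P is a Vilenkin polynomial on G_m × G_m (a finite linear combination of ψ_i ⊗ ψ_j), then for every (x,y) ∈ G_m × G_m, W_n(x,y;P) → 0 as n → ∞; i.e., every point is a Marcinkiewicz–Lebesgue point of a Vilenkin polynomial. -/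
open Complex Finset

noncomputable section

open MeasureTheory ENNReal NNReal
open scoped Classical

variable (m : ℕ → ℕ)

/-- Marcinkiewicz–Fejér mean via convolution with the kernel:
`σ_n(x,y;f) = ∫ f(t,u) K_n(x−t, y−u) dμ(t,u)`. -/
def sigmaMF (μ : Measure ((∀ j, ZMod (m j)) × (∀ j, ZMod (m j))))
    (n : ℕ) (f : (∀ j, ZMod (m j)) × (∀ j, ZMod (m j)) → ℂ) (x y : ∀ j, ZMod (m j)) : ℂ :=
  ∫ tu, f tu * MKer m n (x - tu.1) (y - tu.2) ∂μ

/-- The Marcinkiewicz–Lebesgue expression `W_j(x,y;f)`. -/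
def Wml (μ : Measure ((∀ j, ZMod (m j)) × (∀ j, ZMod (m j))))
    (n : ℕ) (f : (∀ j, ZMod (m j)) × (∀ j, ZMod (m j)) → ℂ) (x y : ∀ j, ZMod (m j)) : ℝ :=
  (Mf m n : ℝ)⁻¹ *
      ∑ q ∈ Finset.range n, ∑ k ∈ Finset.Icc q (n - 1), ∑ v ∈ Finset.Icc 1 (m q - 1),
        (Mf m q : ℝ) * (Mf m k : ℝ) ^ 2 *
          ∫ tu in (cyl m k 0) ×ˢ (cyl m k (v • evec m q)),
            ‖f (x - tu.1, y - tu.2) - f (x, y)‖ * ‖rr m (k + 1) (n - 1) tu.1 tu.2‖ ∂μ +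
    (Mf m n : ℝ)⁻¹ *
      ∑ q ∈ Finset.range n, ∑ k ∈ Finset.Icc q (n - 1), ∑ v ∈ Finset.Icc 1 (m q - 1),
        (Mf m q : ℝ) * (Mf m k : ℝ) ^ 2 *
          ∫ tu in (cyl m k (v • evec m q)) ×ˢ (cyl m k 0),
            ‖f (x - tu.1, y - tu.2) - f (x, y)‖ * ‖rr m (k + 1) (n - 1) tu.1 tu.2‖ ∂μ +
    (∑ s ∈ Finset.range (n + 1), ∑ i ∈ Finset.Icc s n, ∑ v ∈ Finset.Icc 1 (m s - 1),
      (Mf m s : ℝ) * (Mf m i : ℝ) *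
        ∫ tu in (cyl m n 0) ×ˢ (cyl m i (v • evec m s)),
          ‖f (x - tu.1, y - tu.2) - f (x, y)‖ ∂μ) +
    ∑ s ∈ Finset.range (n + 1), ∑ i ∈ Finset.Icc s n, ∑ v ∈ Finset.Icc 1 (m s - 1),
      (Mf m s : ℝ) * (Mf m i : ℝ) *
        ∫ tu in (cyl m i (v • evec m s)) ×ˢ (cyl m n 0),
          ‖f (x - tu.1, y - tu.2) - f (x, y)‖ ∂μ

open Filter

/-! A Vilenkin polynomial `P` is bounded and depends only on the digits `x_j, y_j` with `j < N`
for some `N`. For `n ≥ N`, in a term of `W_n(x, y; P)` whose index `q` (resp. `s`) is at least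
`N` the integration domain only moves digits of index `≥ N`, so `|P(x - t, y - u) - P(x, y)|`
vanishes on it. Each of the `O(n)` remaining terms is `O(M_N / M_n)`: for the terms containing
`r_{k+1,n-1}` because `|r_{k+1,n-1}|` has integral exactly `M_k⁻²` over every rectangle
`I_k(a) × I_k(b)`, for the others because `μ(I_n(a) × I_i(b)) = (M_n M_i)⁻¹`. Hence
`W_n(x, y; P) = O(n / M_n) = O(n / 2ⁿ)`. -/

instance (n : ℕ) : Countable (ZMod n) := by
  cases n
  · exact inferInstanceAs (Countable ℤ)
  · exact inferInstanceAs (Countable (Fin _))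

namespace Vilenkin

open Function MeasureTheory Filter Topology

abbrev G (m : ℕ → ℕ) : Type := ∀ j, ZMod (m j)

variable {m : ℕ → ℕ}

lemma Mf_succ (k : ℕ) : Mf m (k + 1) = m k * Mf m k := rfl

lemma Mf_pos (hm : ∀ k, 0 < m k) (n : ℕ) : 0 < Mf m n := by
  induction n with
  | zero => exact Nat.one_pos
  | succ k ih => exact Nat.mul_pos (hm k) ih

lemma two_pow_le_Mf (hm : ∀ k, 2 ≤ m k) (n : ℕ) : 2 ^ n ≤ Mf m n := by
  induction n with
  | zero => rfl
  | succ k ih => rw [pow_succ', Mf_succ]; exact Nat.mul_le_mul (hm k) ih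

lemma Mf_mono (hm : ∀ k, 0 < m k) : Monotone (Mf m) :=
  monotone_nat_of_le_succ fun k => Nat.le_mul_of_pos_left _ (hm k)

lemma Mf_dvd_Mf {k l : ℕ} (hkl : k ≤ l) : Mf m k ∣ Mf m l := by
  induction l, hkl using Nat.le_induction with
  | base => rfl
  | succ l _ ih => exact ih.mul_left (m l)

lemma psi_Mf (hm : ∀ k, 2 ≤ m k) (l : ℕ) (x : G m) : psi m (Mf m l) x = rad m l x := by
  have hm0 : ∀ k, 0 < m k := fun k => two_pos.trans_le (hm k)
  have hl : l < Mf m l + 1 := Nat.lt_succ_of_lt (l.lt_two_pow_self.trans_le (two_pow_le_Mf hm l))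
  rw [psi, prod_eq_single_of_mem l (mem_range.mpr hl), Nat.div_self (Mf_pos hm0 l),
    Nat.mod_eq_of_lt (hm l), pow_one]
  intro b _ hbl
  rcases hbl.lt_or_gt with hb | hb
  · obtain ⟨c, hc⟩ := Mf_dvd_Mf (m := m) (Nat.succ_le_of_lt hb)
    rw [hc, Mf_succ, mul_assoc, mul_left_comm, Nat.mul_div_cancel_left _ (Mf_pos hm0 b),
      Nat.mul_mod_right, pow_zero]
  · have : Mf m l < Mf m b := (lt_mul_of_one_lt_left (Mf_pos hm0 l) (hm l)).trans_le
      (Mf_mono hm0 (Nat.succ_le_of_lt hb))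
    rw [Nat.div_eq_of_lt this, Nat.zero_mod, pow_zero]

lemma norm_rad (k : ℕ) (x : G m) : ‖rad m k x‖ = 1 := by
  have : 2 * Real.pi * I * ((x k).val : ℂ) / (m k : ℂ) =
      ((2 * Real.pi * (x k).val / m k : ℝ) : ℂ) * I := by
    push_cast; ring
  rw [rad, this, Complex.norm_exp_ofReal_mul_I]

lemma norm_psi (n : ℕ) (x : G m) : ‖psi m n x‖ = 1 := by
  rw [psi, norm_prod]
  exact prod_eq_one fun k _ => by rw [norm_pow, norm_rad, one_pow]

lemma psi_congr {n : ℕ} {x y : G m} (h : ∀ j ≤ n, x j = y j) : psi m n x = psi m n y :=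
  prod_congr rfl fun k hk => by rw [rad, rad, h k (Nat.lt_succ_iff.mp (mem_range.mp hk))]

lemma rad_eq_pow (k : ℕ) (x : G m) : rad m k x = cexp (2 * Real.pi * I / m k) ^ (x k).val := by
  rw [rad, ← Complex.exp_nat_mul]
  ring_nf

lemma sum_rad_pow {k : ℕ} (hk : m k ≠ 0) (x : G m) :
    ∑ s ∈ range (m k), rad m k x ^ s = if x k = 0 then (m k : ℂ) else 0 := by
  have hζ := Complex.isPrimitiveRoot_exp (m k) hk
  split_ifs with hx
  · simp [rad, hx]
  · have hr : rad m k x ≠ 1 := by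
      have : NeZero (m k) := ⟨hk⟩
      rwa [rad_eq_pow, Ne, hζ.pow_eq_one_iff_dvd, ← ZMod.natCast_eq_zero_iff,
        ZMod.natCast_zmod_val]
    rw [geom_sum_eq hr, rad_eq_pow, pow_right_comm, hζ.pow_eq_one, one_pow, sub_self, zero_div]

lemma rr_eq (hm : ∀ k, 2 ≤ m k) (k r : ℕ) (x y : G m) :
    rr m k r x y = ∏ l ∈ Icc k r, if x l + y l = 0 then (m l : ℂ) else 0 :=
  prod_congr rfl fun l _ => by
    simp_rw [psi_Mf hm, sum_rad_pow (two_pos.trans_le (hm l)).ne', Pi.add_apply]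

lemma rr_of_lt {k r : ℕ} (h : r < k) (x y : G m) : rr m k r x y = 1 := by
  rw [rr, Icc_eq_empty_of_lt h, prod_empty]

lemma rr_of_le (hm : ∀ k, 2 ≤ m k) {k r : ℕ} (h : k ≤ r) (x y : G m) :
    rr m k r x y = (if x k + y k = 0 then (m k : ℂ) else 0) * rr m (k + 1) r x y := by
  rw [rr_eq hm, rr_eq hm, ← insert_Icc_add_one_left_eq_Icc h, prod_insert (by simp)]

lemma norm_rr_le (hm : ∀ k, 2 ≤ m k) (k r : ℕ) (x y : G m) :
    ‖rr m k r x y‖ ≤ ∏ l ∈ Icc k r, (m l : ℝ) := by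
  rw [rr_eq hm, norm_prod]
  exact prod_le_prod (fun _ _ => norm_nonneg _) fun l _ => by split_ifs <;> simp

@[fun_prop]
lemma measurable_rad (k : ℕ) : Measurable (rad m k) :=
  (Measurable.of_discrete (f := fun c : ZMod (m k) =>
    cexp (2 * Real.pi * I * c.val / m k))).comp (measurable_pi_apply k)

@[fun_prop]
lemma measurable_psi (n : ℕ) : Measurable (psi m n) := by
  unfold psi
  fun_prop

lemma measurable_rr (k r : ℕ) : Measurable fun tu : G m × G m => rr m k r tu.1 tu.2 := by
  unfold rr
  fun_prop

lemma measurableSet_cyl (k : ℕ) (z : G m) : MeasurableSet (cyl m k z) :=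
  show MeasurableSet (Set.pi (Set.Iio k) fun j => {z j}) from
    .pi (Set.to_countable _) fun _ _ => .of_discrete

lemma cyl_eq_iUnion (k : ℕ) (a : G m) :
    cyl m k a = ⋃ c : ZMod (m k), cyl m (k + 1) (update a k c) := by
  ext x
  simp only [Set.mem_iUnion, cyl, Set.mem_ofPred_eq]
  constructor
  · intro h
    refine ⟨x k, fun j hj => ?_⟩
    rcases Nat.lt_succ_iff_lt_or_eq.mp hj with hj | rfl
    · rw [update_of_ne hj.ne]; exact h j hj
    · simp
  · rintro ⟨c, hc⟩ j hj
    simpa [update_of_ne hj.ne] using hc j (Nat.lt_succ_of_lt hj)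

lemma apply_eq_of_mem_cyl_update {k : ℕ} {a x : G m} {c : ZMod (m k)}
    (hx : x ∈ cyl m (k + 1) (update a k c)) : x k = c := by
  simpa using hx k k.lt_succ_self

lemma pairwise_disjoint_cyl_update (k : ℕ) (a : G m) :
    Pairwise (Disjoint on fun c : ZMod (m k) => cyl m (k + 1) (update a k c)) :=
  fun _ _ hcd => Set.disjoint_left.mpr fun _ hc hd =>
    hcd ((apply_eq_of_mem_cyl_update hc).symm.trans (apply_eq_of_mem_cyl_update hd))

section Splitting

variable (μ : Measure (G m × G m)) (k : ℕ) [NeZero (m k)]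

lemma measure_cyl_prod_eq_sum (a : G m) {S : Set (G m)} (hS : MeasurableSet S) :
    μ (cyl m k a ×ˢ S) = ∑ c : ZMod (m k), μ (cyl m (k + 1) (update a k c) ×ˢ S) := by
  rw [cyl_eq_iUnion k a, Set.iUnion_prod_const, measure_iUnion
    (fun _ _ hcd => Set.disjoint_prod.mpr (.inl (pairwise_disjoint_cyl_update k a hcd)))
    (fun _ => (measurableSet_cyl _ _).prod hS), tsum_fintype]

lemma measure_prod_cyl_eq_sum (b : G m) {S : Set (G m)} (hS : MeasurableSet S) :
    μ (S ×ˢ cyl m k b) = ∑ c : ZMod (m k), μ (S ×ˢ cyl m (k + 1) (update b k c)) := by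
  rw [cyl_eq_iUnion k b, Set.prod_iUnion, measure_iUnion
    (fun _ _ hcd => Set.disjoint_prod.mpr (.inr (pairwise_disjoint_cyl_update k b hcd)))
    (fun _ => hS.prod (measurableSet_cyl _ _)), tsum_fintype]

lemma setIntegral_cyl_prod_cyl_eq_sum (a b : G m) {f : G m × G m → ℝ}
    (hf : IntegrableOn f (cyl m k a ×ˢ cyl m k b) μ) :
    ∫ tu in cyl m k a ×ˢ cyl m k b, f tu ∂μ = ∑ p : ZMod (m k) × ZMod (m k),
      ∫ tu in cyl m (k + 1) (update a k p.1) ×ˢ cyl m (k + 1) (update b k p.2), f tu ∂μ := by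
  have hU : cyl m k a ×ˢ cyl m k b = ⋃ p : ZMod (m k) × ZMod (m k),
      cyl m (k + 1) (update a k p.1) ×ˢ cyl m (k + 1) (update b k p.2) := by
    rw [cyl_eq_iUnion k a, cyl_eq_iUnion k b, ← Set.iUnion_prod]
  have hdisj : Pairwise (Disjoint on fun p : ZMod (m k) × ZMod (m k) =>
      cyl m (k + 1) (update a k p.1) ×ˢ cyl m (k + 1) (update b k p.2)) := by
    intro p q hpq
    refine Set.disjoint_prod.mpr ?_
    by_cases h1 : p.1 = q.1
    · exact .inr (pairwise_disjoint_cyl_update k b fun h2 => hpq (Prod.ext h1 h2))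
    · exact .inl (pairwise_disjoint_cyl_update k a h1)
  rw [hU] at hf ⊢
  rw [integral_iUnion (fun _ => (measurableSet_cyl _ _).prod (measurableSet_cyl _ _)) hdisj hf,
    tsum_fintype]

end Splitting

def IsHaarOnCyl (m : ℕ → ℕ) (μ : Measure (G m × G m)) : Prop :=
  ∀ k (z w : G m), μ (cyl m k z ×ˢ cyl m k w) = ((Mf m k : ℝ≥0∞) * Mf m k)⁻¹

variable {μ : Measure (G m × G m)}

lemma measure_cyl_prod_cyl (hm : ∀ k, 2 ≤ m k) (hμ : IsHaarOnCyl m μ) (k l : ℕ) (a b : G m) :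
    μ (cyl m k a ×ˢ cyl m l b) = ((Mf m k : ℝ≥0∞) * Mf m l)⁻¹ := by
  have hm0 : ∀ k, (m k : ℝ≥0∞) ≠ 0 := fun k => by simpa using (two_pos.trans_le (hm k)).ne'
  have hcancel : ∀ k (c : ℝ≥0∞), (m k : ℝ≥0∞) * (m k * c)⁻¹ = c⁻¹ := fun k c => by
    rw [ENNReal.mul_inv (.inl (hm0 k)) (.inl (ENNReal.natCast_ne_top _)), ← mul_assoc,
      ENNReal.mul_inv_cancel (hm0 k) (ENNReal.natCast_ne_top _), one_mul]
  rcases le_total k l with hkl | hlk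
  · obtain ⟨d, rfl⟩ := Nat.exists_eq_add_of_le hkl
    induction d generalizing k a with
    | zero => exact hμ k a b
    | succ d ih =>
      have : NeZero (m k) := ⟨by simpa using hm0 k⟩
      rw [measure_cyl_prod_eq_sum μ k a (measurableSet_cyl _ _)]
      simp_rw [show k + (d + 1) = k + 1 + d by omega, ih (k + 1) _ (Nat.le_add_right _ _)]
      rw [sum_const, card_univ, ZMod.card, nsmul_eq_mul, Mf_succ, Nat.cast_mul, mul_assoc,
        hcancel]
  · obtain ⟨d, rfl⟩ := Nat.exists_eq_add_of_le hlk
    induction d generalizing l b with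
    | zero => exact hμ l a b
    | succ d ih =>
      have : NeZero (m l) := ⟨by simpa using hm0 l⟩
      rw [measure_prod_cyl_eq_sum μ l b (measurableSet_cyl _ _)]
      simp_rw [show l + (d + 1) = l + 1 + d by omega, ih (l + 1) _ (Nat.le_add_right _ _)]
      rw [sum_const, card_univ, ZMod.card, nsmul_eq_mul, Mf_succ, Nat.cast_mul, mul_left_comm,
        hcancel]

lemma Wml_nonneg (n : ℕ) (F : G m × G m → ℂ) (x y : G m) : 0 ≤ Wml m μ n F x y := by
  unfold Wml
  positivity

variable [IsFiniteMeasure μ]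

lemma integrableOn_norm_rr (hm : ∀ k, 2 ≤ m k) (k r : ℕ) (S : Set (G m × G m)) :
    IntegrableOn (fun tu => ‖rr m k r tu.1 tu.2‖) S μ :=
  (Integrable.of_bound (measurable_rr k r).norm.aestronglyMeasurable _
    (.of_forall fun tu => (norm_norm _).trans_le (norm_rr_le hm k r tu.1 tu.2))).integrableOn

lemma sum_ite_add_eq_zero (n : ℕ) [NeZero n] (x : ℝ) :
    ∑ p : ZMod n × ZMod n, (if p.1 + p.2 = 0 then x else 0) = n * x := by
  simp [Fintype.sum_prod_type, add_eq_zero_iff_eq_neg']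

theorem setIntegral_norm_rr_cyl (hm : ∀ k, 2 ≤ m k) (hμ : IsHaarOnCyl m μ) (r k : ℕ)
    (a b : G m) :
    ∫ tu in cyl m k a ×ˢ cyl m k b, ‖rr m k r tu.1 tu.2‖ ∂μ = ((Mf m k : ℝ) * Mf m k)⁻¹ := by
  rcases lt_or_ge r k with hrk | hkr
  · simp [rr_of_lt hrk, measureReal_def, hμ k a b]
  have : NeZero (m k) := ⟨(two_pos.trans_le (hm k)).ne'⟩
  -- On a piece of level `k + 1` the factor `l = k` of `r_{k,r}` is the constant `m_k [c + d = 0]`.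
  have hpiece : ∀ p : ZMod (m k) × ZMod (m k),
      ∫ tu in cyl m (k + 1) (update a k p.1) ×ˢ cyl m (k + 1) (update b k p.2),
          ‖rr m k r tu.1 tu.2‖ ∂μ
        = (if p.1 + p.2 = 0 then (m k : ℝ) else 0) * ((Mf m (k + 1) : ℝ) * Mf m (k + 1))⁻¹ := by
    intro p
    rw [← setIntegral_norm_rr_cyl hm hμ r (k + 1), ← integral_const_mul]
    refine setIntegral_congr_fun ((measurableSet_cyl _ _).prod (measurableSet_cyl _ _)) ?_
    rintro tu ⟨ht, hu⟩
    dsimp only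
    rw [rr_of_le hm hkr, norm_mul, apply_eq_of_mem_cyl_update ht, apply_eq_of_mem_cyl_update hu]
    split_ifs <;> simp
  rw [setIntegral_cyl_prod_cyl_eq_sum μ k a b (integrableOn_norm_rr hm k r _),
    sum_congr rfl fun p _ => hpiece p, ← sum_mul, sum_ite_add_eq_zero, Mf_succ, Nat.cast_mul]
  have hmk : (m k : ℝ) ≠ 0 := Nat.cast_ne_zero.mpr (NeZero.ne _)
  have hMk : (Mf m k : ℝ) ≠ 0 :=
    Nat.cast_ne_zero.mpr (Mf_pos (fun k => two_pos.trans_le (hm k)) k).ne'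
  field_simp
termination_by r + 1 - k

theorem setIntegral_norm_rr_succ_cyl (hm : ∀ k, 2 ≤ m k) (hμ : IsHaarOnCyl m μ) (r k : ℕ)
    (a b : G m) :
    ∫ tu in cyl m k a ×ˢ cyl m k b, ‖rr m (k + 1) r tu.1 tu.2‖ ∂μ = ((Mf m k : ℝ) * Mf m k)⁻¹ := by
  have : NeZero (m k) := ⟨(two_pos.trans_le (hm k)).ne'⟩
  rw [setIntegral_cyl_prod_cyl_eq_sum μ k a b (integrableOn_norm_rr hm _ r _)]
  simp_rw [setIntegral_norm_rr_cyl hm hμ r (k + 1)]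
  rw [sum_const, card_univ, Fintype.card_prod, ZMod.card, nsmul_eq_mul, Mf_succ, Nat.cast_mul,
    Nat.cast_mul]
  have hmk : (m k : ℝ) ≠ 0 := Nat.cast_ne_zero.mpr (NeZero.ne _)
  have hMk : (Mf m k : ℝ) ≠ 0 :=
    Nat.cast_ne_zero.mpr (Mf_pos (fun k => two_pos.trans_le (hm k)) k).ne'
  field_simp

lemma setIntegral_mul_norm_rr_le (hm : ∀ k, 2 ≤ m k) (hμ : IsHaarOnCyl m μ)
    {f : G m × G m → ℝ} (hf : Measurable f) {C : ℝ} (hfC : ∀ z, ‖f z‖ ≤ C) (r k : ℕ)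
    (a b : G m) :
    ∫ tu in cyl m k a ×ˢ cyl m k b, f tu * ‖rr m (k + 1) r tu.1 tu.2‖ ∂μ
      ≤ C * ((Mf m k : ℝ) * Mf m k)⁻¹ := by
  have hrr := integrableOn_norm_rr (μ := μ) hm (k + 1) r (cyl m k a ×ˢ cyl m k b)
  calc _ ≤ ∫ tu in cyl m k a ×ˢ cyl m k b, C * ‖rr m (k + 1) r tu.1 tu.2‖ ∂μ :=
        setIntegral_mono_on (hrr.bdd_mul hf.aestronglyMeasurable (.of_forall hfC))
          (hrr.const_mul C) ((measurableSet_cyl _ _).prod (measurableSet_cyl _ _))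
          fun tu _ => mul_le_mul_of_nonneg_right ((Real.le_norm_self _).trans (hfC tu))
            (norm_nonneg _)
    _ = C * ((Mf m k : ℝ) * Mf m k)⁻¹ := by
      rw [integral_const_mul, setIntegral_norm_rr_succ_cyl hm hμ]

lemma setIntegral_cyl_prod_cyl_le (hm : ∀ k, 2 ≤ m k) (hμ : IsHaarOnCyl m μ)
    {f : G m × G m → ℝ} (hf : Measurable f) {C : ℝ} (hfC : ∀ z, ‖f z‖ ≤ C) (k l : ℕ)
    (a b : G m) :
    ∫ tu in cyl m k a ×ˢ cyl m l b, f tu ∂μ ≤ C * ((Mf m k : ℝ) * Mf m l)⁻¹ := by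
  calc _ ≤ ∫ _ in cyl m k a ×ˢ cyl m l b, C ∂μ :=
        setIntegral_mono_on
          (Integrable.of_bound hf.aestronglyMeasurable C (.of_forall hfC)).integrableOn
          (integrable_const C).integrableOn ((measurableSet_cyl _ _).prod (measurableSet_cyl _ _))
          fun tu _ => (Real.le_norm_self _).trans (hfC tu)
    _ = C * ((Mf m k : ℝ) * Mf m l)⁻¹ := by
      rw [setIntegral_const, measureReal_def, measure_cyl_prod_cyl hm hμ, smul_eq_mul, mul_comm]
      simp

lemma mul_setIntegral_mul_norm_rr_le (hm : ∀ k, 2 ≤ m k) (hμ : IsHaarOnCyl m μ)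
    {f : G m × G m → ℝ} (hf : Measurable f) {C : ℝ} (hfC : ∀ z, ‖f z‖ ≤ C) {q N : ℕ}
    (hqN : q ≤ N) (r k : ℕ) (a b : G m) :
    (Mf m q : ℝ) * Mf m k ^ 2 *
        ∫ tu in cyl m k a ×ˢ cyl m k b, f tu * ‖rr m (k + 1) r tu.1 tu.2‖ ∂μ
      ≤ C * Mf m N := by
  have hm0 : ∀ k, 0 < m k := fun k => two_pos.trans_le (hm k)
  have hC : 0 ≤ C := (norm_nonneg _).trans (hfC 0)
  have hMk : (Mf m k : ℝ) ≠ 0 := Nat.cast_ne_zero.mpr (Mf_pos hm0 k).ne'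
  calc _ ≤ (Mf m q : ℝ) * Mf m k ^ 2 * (C * ((Mf m k : ℝ) * Mf m k)⁻¹) := by
        gcongr; exact setIntegral_mul_norm_rr_le hm hμ hf hfC r k a b
    _ = C * Mf m q := by field_simp
    _ ≤ C * Mf m N := by gcongr; exact_mod_cast Mf_mono hm0 hqN

lemma mul_setIntegral_cyl_prod_cyl_le (hm : ∀ k, 2 ≤ m k) (hμ : IsHaarOnCyl m μ)
    {f : G m × G m → ℝ} (hf : Measurable f) {C : ℝ} (hfC : ∀ z, ‖f z‖ ≤ C) {s i n N k l : ℕ}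
    (hsN : s ≤ N) (hkl : k = n ∧ l = i ∨ k = i ∧ l = n) (a b : G m) :
    (Mf m s : ℝ) * Mf m i * ∫ tu in cyl m k a ×ˢ cyl m l b, f tu ∂μ ≤ C * Mf m N / Mf m n := by
  have hm0 : ∀ k, 0 < m k := fun k => two_pos.trans_le (hm k)
  have hC : 0 ≤ C := (norm_nonneg _).trans (hfC 0)
  have hMi : (Mf m i : ℝ) ≠ 0 := Nat.cast_ne_zero.mpr (Mf_pos hm0 i).ne'
  have hMn : (0 : ℝ) < Mf m n := Nat.cast_pos.mpr (Mf_pos hm0 n)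
  have hMkl : (Mf m k : ℝ) * Mf m l = Mf m n * Mf m i := by
    rcases hkl with ⟨rfl, rfl⟩ | ⟨rfl, rfl⟩ <;> ring
  calc _ ≤ (Mf m s : ℝ) * Mf m i * (C * ((Mf m k : ℝ) * Mf m l)⁻¹) := by
        gcongr; exact setIntegral_cyl_prod_cyl_le hm hμ hf hfC k l a b
    _ = C * Mf m s / Mf m n := by rw [hMkl]; field_simp
    _ ≤ C * Mf m N / Mf m n := by gcongr; exact_mod_cast Mf_mono hm0 hsN

lemma sum_range_sum_sum_le {ι κ : Type*} {n N L : ℕ} {D : ℝ} (hD : 0 ≤ D) {w : ℕ → ℕ}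
    {K : ℕ → Finset ι} {V : ℕ → Finset κ} {g : ℕ → ι → κ → ℝ}
    (hK : ∀ q, #(K q) ≤ L) (hV : ∀ q, #(V q) ≤ w q)
    (hg : ∀ q < N, ∀ k ∈ K q, ∀ v ∈ V q, g q k v ≤ D)
    (hg0 : ∀ q, N ≤ q → ∀ k ∈ K q, ∀ v ∈ V q, g q k v = 0) :
    ∑ q ∈ range n, ∑ k ∈ K q, ∑ v ∈ V q, g q k v ≤ L * D * ∑ q ∈ range N, (w q : ℝ) := by
  have hterm : ∀ q, ∑ k ∈ K q, ∑ v ∈ V q, g q k v ≤ if q < N then L * D * w q else 0 := by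
    intro q
    split_ifs with hq
    · calc _ ≤ ∑ _k ∈ K q, ∑ _v ∈ V q, D :=
            sum_le_sum fun k hk => sum_le_sum fun v hv => hg q hq k hk v hv
        _ = #(K q) * (#(V q) * D) := by simp only [sum_const, nsmul_eq_mul]
        _ ≤ L * (w q * D) := by gcongr <;> exact_mod_cast (by simp [hK, hV])
        _ = L * D * w q := by ring
    · exact (sum_eq_zero fun k hk => sum_eq_zero fun v hv => hg0 q (not_lt.mp hq) k hk v hv).le
  calc _ ≤ ∑ q ∈ range n, if q < N then L * D * (w q : ℝ) else 0 := sum_le_sum fun q _ => hterm q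
    _ ≤ ∑ q ∈ range N, L * D * (w q : ℝ) := by
      rw [← sum_filter]
      exact sum_le_sum_of_subset_of_nonneg
        (fun q hq => mem_range.mpr (mem_filter.mp hq).2) fun _ _ _ => by positivity
    _ = L * D * ∑ q ∈ range N, (w q : ℝ) := by rw [mul_sum]

def DependsOnFirst {E : Type*} (N : ℕ) (F : G m × G m → E) : Prop :=
  ∀ z w : G m × G m, (∀ j < N, z.1 j = w.1 j) → (∀ j < N, z.2 j = w.2 j) → F z = F w

lemma sub_apply_of_mem_cyl {N k : ℕ} (hk : N ≤ k) {a t : G m} (ha : ∀ j < N, a j = 0)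
    (ht : t ∈ cyl m k a) (x : G m) {j : ℕ} (hj : j < N) : (x - t) j = x j := by
  rw [Pi.sub_apply, ht j (hj.trans_le hk), ha j hj, sub_zero]

lemma smul_evec_apply_of_le {N q : ℕ} (hq : N ≤ q) (v : ℕ) : ∀ j < N, (v • evec m q) j = 0 :=
  fun j hj => by simp [evec, (hj.trans_le hq).ne]

lemma DependsOnFirst.norm_sub_eq_zero {E : Type*} [SeminormedAddGroup E] {F : G m × G m → E}
    {N k l : ℕ}
    (hF : DependsOnFirst N F) (hk : N ≤ k) (hl : N ≤ l) {a b : G m} (ha : ∀ j < N, a j = 0)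
    (hb : ∀ j < N, b j = 0) (x y : G m) {tu : G m × G m} (htu : tu ∈ cyl m k a ×ˢ cyl m l b) :
    ‖F (x - tu.1, y - tu.2) - F (x, y)‖ = 0 := by
  rw [hF (x - tu.1, y - tu.2) (x, y) (fun _ hj => sub_apply_of_mem_cyl hk ha htu.1 x hj)
    fun _ hj => sub_apply_of_mem_cyl hl hb htu.2 y hj, sub_self, norm_zero]

theorem Wml_le_of_dependsOnFirst (hm : ∀ k, 2 ≤ m k) (hμ : IsHaarOnCyl m μ)
    {F : G m × G m → ℂ} (hFm : Measurable F) {C : ℝ} (hFC : ∀ z, ‖F z‖ ≤ C) {N : ℕ}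
    (hF : DependsOnFirst N F) (x y : G m) {n : ℕ} (hn : N ≤ n) :
    Wml m μ n F x y
      ≤ 4 * (2 * C * Mf m N * ∑ q ∈ range N, (m q : ℝ)) * ((n + 1) / Mf m n) := by
  have hΔm : Measurable fun tu : G m × G m => ‖F (x - tu.1, y - tu.2) - F (x, y)‖ := by fun_prop
  have hΔC (tu : G m × G m) : ‖‖F (x - tu.1, y - tu.2) - F (x, y)‖‖ ≤ 2 * C := by
    rw [norm_norm, two_mul]
    exact (norm_sub_le _ _).trans (add_le_add (hFC _) (hFC _))
  have hD : 0 ≤ 2 * C * Mf m N := mul_nonneg ((norm_nonneg _).trans (hΔC 0)) (Nat.cast_nonneg _)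
  have hMn : (0 : ℝ) < Mf m n := Nat.cast_pos.mpr (Mf_pos (fun k => two_pos.trans_le (hm k)) n)
  have hV (q : ℕ) : #(Icc 1 (m q - 1)) ≤ m q := by simp
  have hK (q : ℕ) : #(Icc q (n - 1)) ≤ n + 1 := by simp; omega
  have hK' (q : ℕ) : #(Icc q n) ≤ n + 1 := by simp
  have h0 : ∀ j < N, (0 : G m) j = 0 := fun _ _ => rfl
  unfold Wml
  calc _ ≤ (Mf m n : ℝ)⁻¹ * ((n + 1 : ℕ) * (2 * C * Mf m N) * ∑ q ∈ range N, (m q : ℝ))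
        + (Mf m n : ℝ)⁻¹ * ((n + 1 : ℕ) * (2 * C * Mf m N) * ∑ q ∈ range N, (m q : ℝ))
        + (n + 1 : ℕ) * (2 * C * Mf m N / Mf m n) * ∑ q ∈ range N, (m q : ℝ)
        + (n + 1 : ℕ) * (2 * C * Mf m N / Mf m n) * ∑ q ∈ range N, (m q : ℝ) := by
        gcongr ?_ * ?_ + ?_ * ?_ + ?_ + ?_
        · refine sum_range_sum_sum_le hD hK hV
            (fun q hq k _ v _ => mul_setIntegral_mul_norm_rr_le hm hμ hΔm hΔC hq.le _ _ _ _)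
            fun q hq k hk v _ => mul_eq_zero_of_right _ <| setIntegral_eq_zero_of_forall_eq_zero
              fun tu htu => mul_eq_zero_of_left ?_ _
          have hk : N ≤ k := hq.trans (mem_Icc.mp hk).1
          exact hF.norm_sub_eq_zero hk hk h0 (smul_evec_apply_of_le hq v) x y htu
        · refine sum_range_sum_sum_le hD hK hV
            (fun q hq k _ v _ => mul_setIntegral_mul_norm_rr_le hm hμ hΔm hΔC hq.le _ _ _ _)
            fun q hq k hk v _ => mul_eq_zero_of_right _ <| setIntegral_eq_zero_of_forall_eq_zero
              fun tu htu => mul_eq_zero_of_left ?_ _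
          have hk : N ≤ k := hq.trans (mem_Icc.mp hk).1
          exact hF.norm_sub_eq_zero hk hk (smul_evec_apply_of_le hq v) h0 x y htu
        · exact sum_range_sum_sum_le (by positivity) hK' hV
            (fun s hs i _ v _ => mul_setIntegral_cyl_prod_cyl_le hm hμ hΔm hΔC hs.le
              (.inl ⟨rfl, rfl⟩) _ _)
            fun s hs i hi v _ => mul_eq_zero_of_right _ <| setIntegral_eq_zero_of_forall_eq_zero
              fun tu htu => hF.norm_sub_eq_zero hn (hs.trans (mem_Icc.mp hi).1) h0
                (smul_evec_apply_of_le hs v) x y htu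
        · exact sum_range_sum_sum_le (by positivity) hK' hV
            (fun s hs i _ v _ => mul_setIntegral_cyl_prod_cyl_le hm hμ hΔm hΔC hs.le
              (.inr ⟨rfl, rfl⟩) _ _)
            fun s hs i hi v _ => mul_eq_zero_of_right _ <| setIntegral_eq_zero_of_forall_eq_zero
              fun tu htu => hF.norm_sub_eq_zero (hs.trans (mem_Icc.mp hi).1) hn
                (smul_evec_apply_of_le hs v) h0 x y htu
    _ = _ := by push_cast; field_simp; ring

lemma tendsto_succ_div_Mf (hm : ∀ k, 2 ≤ m k) :
    Tendsto (fun n : ℕ => ((n : ℝ) + 1) / Mf m n) atTop (𝓝 0) := by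
  have h2 : Tendsto (fun n : ℕ => ((n : ℝ) + 1) / 2 ^ n) atTop (𝓝 0) := by
    simpa [add_div] using (tendsto_pow_const_div_const_pow_of_one_lt 1 one_lt_two).add
      (tendsto_pow_const_div_const_pow_of_one_lt 0 one_lt_two)
  refine squeeze_zero (fun n => by positivity) (fun n => ?_) h2
  gcongr
  exact_mod_cast two_pow_le_Mf hm n

theorem tendsto_Wml_of_dependsOnFirst (hm : ∀ k, 2 ≤ m k) (hμ : IsHaarOnCyl m μ)
    {F : G m × G m → ℂ} (hFm : Measurable F) {C : ℝ} (hFC : ∀ z, ‖F z‖ ≤ C) {N : ℕ}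
    (hF : DependsOnFirst N F) (x y : G m) :
    Tendsto (fun n => Wml m μ n F x y) atTop (𝓝 0) := by
  have hlim := (tendsto_succ_div_Mf hm).const_mul
    (4 * (2 * C * Mf m N * ∑ q ∈ range N, (m q : ℝ)))
  rw [mul_zero] at hlim
  exact squeeze_zero' (.of_forall fun n => Wml_nonneg n F x y)
    (eventually_atTop.mpr ⟨N, fun n hn => Wml_le_of_dependsOnFirst hm hμ hFm hFC hF x y hn⟩)
    hlim

def vilenkinPoly (m : ℕ → ℕ) (s : Finset (ℕ × ℕ)) (c : ℕ × ℕ → ℂ) (z : G m × G m) : ℂ :=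
  ∑ ij ∈ s, c ij * psi m ij.1 z.1 * psi m ij.2 z.2

lemma measurable_vilenkinPoly (s : Finset (ℕ × ℕ)) (c : ℕ × ℕ → ℂ) :
    Measurable (vilenkinPoly m s c) := by
  unfold vilenkinPoly
  fun_prop

lemma norm_vilenkinPoly_le (s : Finset (ℕ × ℕ)) (c : ℕ × ℕ → ℂ) (z : G m × G m) :
    ‖vilenkinPoly m s c z‖ ≤ ∑ ij ∈ s, ‖c ij‖ :=
  (norm_sum_le _ _).trans_eq <| sum_congr rfl fun ij _ => by simp [norm_psi]

lemma dependsOnFirst_vilenkinPoly (s : Finset (ℕ × ℕ)) (c : ℕ × ℕ → ℂ) :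
    DependsOnFirst (s.sup (fun ij => max ij.1 ij.2) + 1) (vilenkinPoly m s c) := by
  intro z w h1 h2
  refine sum_congr rfl fun ij hij => ?_
  have hle : max ij.1 ij.2 ≤ s.sup fun ij => max ij.1 ij.2 :=
    le_sup (f := fun ij : ℕ × ℕ => max ij.1 ij.2) hij
  rw [psi_congr fun j hj => h1 j (by omega), psi_congr fun j hj => h2 j (by omega)]

end Vilenkin

theorem stmt17 (hm : ∀ k, 2 ≤ m k)
    (μ : Measure ((∀ j, ZMod (m j)) × (∀ j, ZMod (m j)))) [IsProbabilityMeasure μ]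
    (hcyl : ∀ (k : ℕ) (z w : ∀ j, ZMod (m j)),
      μ ((cyl m k z) ×ˢ (cyl m k w)) = ((Mf m k : ℝ≥0∞) * (Mf m k : ℝ≥0∞))⁻¹)
    (s : Finset (ℕ × ℕ)) (c : ℕ × ℕ → ℂ) :
    ∀ x y : ∀ j, ZMod (m j),
      Tendsto
        (fun n => Wml m μ n
          (fun z => ∑ ij ∈ s, c ij * psi m ij.1 z.1 * psi m ij.2 z.2) x y)
        atTop (nhds 0) :=
  Vilenkin.tendsto_Wml_of_dependsOnFirst hm hcyl (Vilenkin.measurable_vilenkinPoly s c)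
    (Vilenkin.norm_vilenkinPoly_le s c) (Vilenkin.dependsOnFirst_vilenkinPoly s c)
end
end
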